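/- arXiv:2504.07451 — 6 statements merged into one kernel-verified Lean document; each statement's English description precedes it below -/
import Mathlib

section
/- If X is a topological space, f : X → ℝ∪{±∞}, and f is sequentially lower pseudo-continuous at a point x (i.e., for all y with f(y) < f(x) and all sequences xₙ → x, f(y) < liminf f(xₙ)), and X is first countable, then f is lower pseudo-continuous at x (i.e., for all y with f(y) < f(x), f(y) < liminf_{z→x} f(z), where liminf_{z→x} f(z) := sup over neighborhoods U of x of inf_{U} f). -/
open Filter Topology

/-- `liminf_{z → x} f(z) = sup_{U ∈ N(x)} inf_{z ∈ U} f(z)`. -/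
noncomputable def limInfAt {X : Type*} [TopologicalSpace X] (f : X → EReal) (x : X) : EReal :=
  ⨆ U ∈ 𝓝 x, ⨅ z ∈ U, f z

/-- Lower pseudo-continuity at `x`. -/
def LPCAt {X : Type*} [TopologicalSpace X] (f : X → EReal) (x : X) : Prop :=
  ∀ y, f y < f x → f y < limInfAt f x

/-- Sequential lower pseudo-continuity at `x`. -/
def SLPCAt {X : Type*} [TopologicalSpace X] (f : X → EReal) (x : X) : Prop :=
  ∀ y, f y < f x → ∀ u : ℕ → X, Tendsto u atTop (𝓝 x) →
    f y < liminf (fun n => f (u n)) atTop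

theorem slpc_implies_lpc {X : Type*} [TopologicalSpace X]
    [FirstCountableTopology X]
    (f : X → EReal) (x : X) (h : SLPCAt f x) : LPCAt f x := by
  intro y hy
  by_contra hle
  push_neg at hle
  -- antitone neighborhood basis
  obtain ⟨U, hU⟩ := (𝓝 x).exists_antitone_basis
  -- sequence b n ∈ Ioo (f y) (f x) strictly antitone tendsto f y
  obtain ⟨b, hbanti, hbmem, hbtend⟩ := exists_seq_strictAnti_tendsto' hy
  -- for each n, pick u n ∈ U n with f (u n) < b n
  have key : ∀ n : ℕ, ∃ z, z ∈ U n ∧ f z < b n := by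
    intro n
    have h1 : (⨅ z ∈ U n, f z) ≤ limInfAt f x := by
      exact le_iSup₂ (f := fun V (_ : V ∈ 𝓝 x) => ⨅ z ∈ V, f z) (U n) (hU.mem n)
    have h2 : (⨅ z ∈ U n, f z) < b n := lt_of_le_of_lt (h1.trans hle) (hbmem n).1
    obtain ⟨z, hz⟩ := iInf_lt_iff.mp h2
    have hzU : z ∈ U n := by
      by_contra hznot
      simp [hznot] at hz
    refine ⟨z, hzU, ?_⟩
    simpa [hzU] using hz
  choose u huU huf using key
  have htend : Tendsto u atTop (𝓝 x) := hU.tendsto huU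
  have hlt := h y hy u htend
  have hle2 : liminf (fun n => f (u n)) atTop ≤ liminf b atTop :=
    liminf_le_liminf (Eventually.of_forall fun n => (huf n).le)
  rw [hbtend.liminf_eq] at hle2
  exact absurd (lt_of_lt_of_le hlt hle2) (lt_irrefl _)
end

section
/- If f : X → ℝ∪{±∞} is sequentially lower pseudo-continuous at x, then f is lower monotone at x: for every sequence xₙ → x with (f(xₙ)) decreasing, f(x) ≤ f(xₙ) for all n. -/
open Filter Topology

/-- Lower monotonicity at `x`: for every sequence converging to `x` with decreasing values,
`f x ≤ f (u n)` for all `n`. -/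
def LMAt {X : Type*} [TopologicalSpace X] (f : X → EReal) (x : X) : Prop :=
  ∀ u : ℕ → X, Tendsto u atTop (𝓝 x) →
    (∀ n : ℕ, f (u (n + 1)) ≤ f (u n)) →
    ∀ n : ℕ, f x ≤ f (u n)

theorem slpc_implies_lm {X : Type*} [TopologicalSpace X]
    (f : X → EReal) (x : X) (h : SLPCAt f x) : LMAt f x := by
  intro u hu hdec n
  by_contra hlt
  push_neg at hlt
  have hmono : ∀ m k, m ≤ k → f (u k) ≤ f (u m) := by
    intro m k hmk
    induction k with
    | zero => simp_all
    | succ k ih =>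
      rcases Nat.lt_or_ge m (k+1) with h1 | h1
      · exact (hdec k).trans (ih (Nat.lt_succ_iff.mp h1))
      · have : m = k + 1 := le_antisymm hmk h1
        simp [this]
  have key := h (u n) hlt u hu
  have : liminf (fun m => f (u m)) atTop ≤ f (u n) := by
    apply liminf_le_of_frequently_le
    exact ((eventually_atTop.2 ⟨n, fun m hm => hmono n m hm⟩).frequently)
    exact ⟨⊥, Eventually.of_forall fun _ => bot_le⟩
  exact absurd (key.trans_le this) (lt_irrefl _)
end

section
/- Let X be a topological space, f : X → ℝ∪{±∞}, and x ∈ X. Then f is quasi-regular global infimum at x (either every neighborhood V of x satisfies inf_X f ∈ f(V), or some neighborhood U of x satisfies inf_U f > inf_X f) if and only if either there does not exist a minimizing net converging to x, or there is a net (x_α) contained in argmin(f) converging to x. -/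
open Filter Topology

universe u

section Aux

variable {X : Type u} [TopologicalSpace X] (f : X → EReal) (x : X)

/-- From density of argmin near `x`, construct a net in argmin converging to `x`. -/
lemma exists_argmin_net
    (h : ∀ V ∈ 𝓝 x, (⨅ z : X, f z) ∈ f '' V) :
    ∃ (ι : Type u) (_ : Preorder ι) (_ : IsDirected ι (· ≤ ·)) (_ : Nonempty ι)
        (u : ι → X),
        (∀ a : ι, f (u a) = ⨅ z : X, f z) ∧ Tendsto u atTop (𝓝 x) := by
  set m := ⨅ z : X, f z with hm
  let ι : Type u := {p : Set X × X // p.1 ∈ 𝓝 x ∧ p.2 ∈ p.1 ∧ f p.2 = m}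
  letI : Preorder ι :=
    { le := fun p q => q.1.1 ⊆ p.1.1
      le_refl := fun p => subset_rfl
      le_trans := fun a b c h1 h2 => Set.Subset.trans h2 h1 }
  haveI : IsDirected ι (· ≤ ·) := by
    constructor
    intro p q
    have hV : p.1.1 ∩ q.1.1 ∈ 𝓝 x := Filter.inter_mem p.2.1 q.2.1
    obtain ⟨w, hw, hfw⟩ := h _ hV
    refine ⟨⟨(p.1.1 ∩ q.1.1, w), hV, hw, hfw⟩, ?_, ?_⟩
    · exact Set.inter_subset_left
    · exact Set.inter_subset_right
  haveI : Nonempty ι := by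
    obtain ⟨z, _, hfz⟩ := h Set.univ Filter.univ_mem
    exact ⟨⟨(Set.univ, z), Filter.univ_mem, Set.mem_univ z, hfz⟩⟩
  refine ⟨ι, inferInstance, inferInstance, inferInstance, fun p => p.1.2,
    fun p => p.2.2.2, ?_⟩
  intro s hs
  rw [Filter.mem_map]
  obtain ⟨z0, hz0s, hz0⟩ := h s hs
  have hp0 : ((s, z0) : Set X × X).1 ∈ 𝓝 x := hs
  refine Filter.mem_of_superset (Filter.Ici_mem_atTop (⟨(s, z0), hs, hz0s, hz0⟩ : ι)) ?_
  intro q hq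
  exact hq q.2.2.1

/-- From a net in argmin converging to `x`, deduce density of argmin near `x`. -/
lemma dense_of_argmin_net
    (h : ∃ (ι : Type u) (_ : Preorder ι) (_ : IsDirected ι (· ≤ ·)) (_ : Nonempty ι)
        (u : ι → X),
        (∀ a : ι, f (u a) = ⨅ z : X, f z) ∧ Tendsto u atTop (𝓝 x)) :
    ∀ V ∈ 𝓝 x, (⨅ z : X, f z) ∈ f '' V := by
  obtain ⟨ι, _, _, _, u, heq, hux⟩ := h
  intro V hV
  have h1 : ∀ᶠ a in (atTop : Filter ι), u a ∈ V := hux hV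
  obtain ⟨a, ha⟩ := h1.exists
  exact ⟨u a, ha, heq a⟩

/-- A minimizing net converging to `x` forces every neighborhood to have infimum `⨅ f`. -/
lemma inf_le_of_min_net
    (h : ∃ (ι : Type u) (_ : Preorder ι) (_ : IsDirected ι (· ≤ ·)) (_ : Nonempty ι)
        (u : ι → X),
        Tendsto u atTop (𝓝 x) ∧
        Tendsto (fun a => f (u a)) atTop (𝓝 (⨅ z : X, f z))) :
    ∀ U ∈ 𝓝 x, (⨅ z ∈ U, f z) ≤ ⨅ z : X, f z := by
  obtain ⟨ι, _, _, _, u, hux, hum⟩ := h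
  intro U hU
  by_contra hcon
  push_neg at hcon
  have h1 : ∀ᶠ a in (atTop : Filter ι), u a ∈ U := hux hU
  have h2 : ∀ᶠ a in (atTop : Filter ι), f (u a) < ⨅ z ∈ U, f z :=
    hum (Iio_mem_nhds hcon)
  obtain ⟨a, haU, halt⟩ := (h1.and h2).exists
  exact absurd (iInf₂_le (u a) haU) (not_le.2 halt)

/-- If every neighborhood of `x` has infimum `⨅ f`, construct a minimizing net. -/
lemma exists_min_net
    (h : ∀ U ∈ 𝓝 x, (⨅ z ∈ U, f z) ≤ ⨅ z : X, f z) :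
    ∃ (ι : Type u) (_ : Preorder ι) (_ : IsDirected ι (· ≤ ·)) (_ : Nonempty ι)
        (u : ι → X),
        Tendsto u atTop (𝓝 x) ∧
        Tendsto (fun a => f (u a)) atTop (𝓝 (⨅ z : X, f z)) := by
  set m := ⨅ z : X, f z with hm
  by_cases htop : m = ⊤
  · -- then f is identically ⊤; use the constant net at x
    have hfx : f x = m := le_antisymm (htop ▸ le_top) (iInf_le f x)
    refine ⟨ULift.{u} ℕ, inferInstance, inferInstance, inferInstance, fun _ => x,
      tendsto_const_nhds, ?_⟩
    simp only [hfx]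
    exact (tendsto_const_nhds : Tendsto (fun _ : ULift.{u} ℕ => m) atTop (𝓝 m))
  · have hmtop : m < ⊤ := lt_top_iff_ne_top.2 htop
    -- helper: find a point in U with value below t
    have key : ∀ U ∈ 𝓝 x, ∀ t : EReal, m < t → ∃ z ∈ U, f z < t := by
      intro U hU t ht
      have : (⨅ z ∈ U, f z) < t := lt_of_le_of_lt (h U hU) ht
      obtain ⟨z, hz⟩ := iInf_lt_iff.1 this
      obtain ⟨hzU, hzt⟩ := iInf_lt_iff.1 hz
      exact ⟨z, hzU, hzt⟩
    let ι : Type u := {p : Set X × EReal × X //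
      p.1 ∈ 𝓝 x ∧ m < p.2.1 ∧ p.2.2 ∈ p.1 ∧ f p.2.2 < p.2.1}
    letI : Preorder ι :=
      { le := fun p q => q.1.1 ⊆ p.1.1 ∧ q.1.2.1 ≤ p.1.2.1
        le_refl := fun p => ⟨subset_rfl, le_rfl⟩
        le_trans := fun a b c h1 h2 => ⟨h2.1.trans h1.1, h2.2.trans h1.2⟩ }
    haveI : IsDirected ι (· ≤ ·) := by
      constructor
      intro p q
      have hV : p.1.1 ∩ q.1.1 ∈ 𝓝 x := Filter.inter_mem p.2.1 q.2.1
      have ht : m < min p.1.2.1 q.1.2.1 := lt_min p.2.2.1 q.2.2.1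
      obtain ⟨w, hw, hfw⟩ := key _ hV _ ht
      refine ⟨⟨(p.1.1 ∩ q.1.1, min p.1.2.1 q.1.2.1, w), hV, ht, hw, hfw⟩, ?_, ?_⟩
      · exact ⟨Set.inter_subset_left, min_le_left _ _⟩
      · exact ⟨Set.inter_subset_right, min_le_right _ _⟩
    haveI : Nonempty ι := by
      obtain ⟨z, hz, hfz⟩ := key Set.univ Filter.univ_mem ⊤ hmtop
      exact ⟨⟨(Set.univ, ⊤, z), Filter.univ_mem, hmtop, hz, hfz⟩⟩
    refine ⟨ι, inferInstance, inferInstance, inferInstance, fun p => p.1.2.2, ?_, ?_⟩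
    · intro s hs
      rw [Filter.mem_map]
      obtain ⟨z0, hz0s, hz0⟩ := key s hs ⊤ hmtop
      refine Filter.mem_of_superset
        (Filter.Ici_mem_atTop (⟨(s, ⊤, z0), hs, hmtop, hz0s, hz0⟩ : ι)) ?_
      intro q hq
      exact hq.1 q.2.2.2.1
    · rw [tendsto_order]
      constructor
      · intro s hs
        exact Filter.Eventually.of_forall fun p => lt_of_lt_of_le hs (iInf_le f _)
      · intro t ht
        rw [Filter.eventually_iff]
        obtain ⟨z0, hz0, hfz0⟩ := key Set.univ Filter.univ_mem t ht
        refine Filter.mem_of_superset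
          (Filter.Ici_mem_atTop (⟨(Set.univ, t, z0), Filter.univ_mem, ht, hz0, hfz0⟩ : ι)) ?_
        intro q hq
        exact lt_of_lt_of_le q.2.2.2.2 hq.2

end Aux

theorem qrgi_iff_net_characterization {X : Type u} [TopologicalSpace X]
    (f : X → EReal) (x : X) :
    -- f is QRGI at x
    ((∀ V ∈ 𝓝 x, (⨅ z : X, f z) ∈ f '' V) ∨
      ∃ U ∈ 𝓝 x, (⨅ z : X, f z) < ⨅ z ∈ U, f z) ↔
    -- iff no minimizing net converges to x, or some net in argmin f converges to x
    ((¬ ∃ (ι : Type u) (_ : Preorder ι) (_ : IsDirected ι (· ≤ ·)) (_ : Nonempty ι)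
          (u : ι → X),
          Tendsto u atTop (𝓝 x) ∧
          Tendsto (fun a => f (u a)) atTop (𝓝 (⨅ z : X, f z))) ∨
      ∃ (ι : Type u) (_ : Preorder ι) (_ : IsDirected ι (· ≤ ·)) (_ : Nonempty ι)
          (u : ι → X),
          (∀ a : ι, f (u a) = ⨅ z : X, f z) ∧ Tendsto u atTop (𝓝 x)) := by
  constructor
  · rintro (hA | hB)
    · exact Or.inr (exists_argmin_net f x hA)
    · refine Or.inl fun hC => ?_
      obtain ⟨U, hU, hlt⟩ := hB
      exact absurd (inf_le_of_min_net f x hC U hU) (not_le.2 hlt)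
  · rintro (hC | hD)
    · by_cases hb : ∃ U ∈ 𝓝 x, (⨅ z : X, f z) < ⨅ z ∈ U, f z
      · exact Or.inr hb
      · push_neg at hb
        exact absurd (exists_min_net f x fun U hU => (hb U hU)) hC
    · exact Or.inl (dense_of_argmin_net f x hD)
end

section
/- If f : X → ℝ∪{±∞} is decreasing semi-continuous at x (for every net x_α → x with (f(x_α)) strictly decreasing, f(x) ≤ lim_α f(x_α)), then f is quasi-regular global infimum at x. -/
open Filter Topology

universe u

/-- Decreasing semi-continuity at `x`: for every net converging to `x` whose values under `f`
are strictly decreasing, `f x ≤ lim_α f (x_α)` (the limit of a decreasing net being its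
infimum). -/
def DSCAt {X : Type u} [TopologicalSpace X] (f : X → EReal) (x : X) : Prop :=
  ∀ (ι : Type u) [Preorder ι] [IsDirected ι (· ≤ ·)] [Nonempty ι] (u : ι → X),
    Tendsto u atTop (𝓝 x) →
    (∀ a b : ι, a < b → f (u b) < f (u a)) →
    f x ≤ ⨅ a : ι, f (u a)

/-- Quasi-regular global infimum at `x`. -/
def QRGIAt {X : Type u} [TopologicalSpace X] (f : X → EReal) (x : X) : Prop :=
  (∀ V ∈ 𝓝 x, (⨅ z : X, f z) ∈ f '' V) ∨
    ∃ U ∈ 𝓝 x, (⨅ z : X, f z) < ⨅ z ∈ U, f z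

theorem dsc_implies_qrgi {X : Type u} [TopologicalSpace X]
    (f : X → EReal) (x : X) (h : DSCAt f x) : QRGIAt f x := by
  by_contra hq
  unfold QRGIAt at hq
  push_neg at hq
  obtain ⟨⟨V, hV, hVnot⟩, hB⟩ := hq
  set m := ⨅ z : X, f z with hm
  have hle : ∀ z, m ≤ f z := fun z => iInf_le f z
  have hVlt : ∀ z ∈ V, m < f z := by
    intro z hz
    rcases lt_or_eq_of_le (hle z) with h' | h'
    · exact h'
    · exact absurd ⟨z, hz, h'.symm⟩ hVnot
  have hx : x ∈ V := mem_of_mem_nhds hV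
  -- key: below any t > m, every neighborhood intersected with V has a point with small value
  have key : ∀ t, m < t → ∀ U ∈ 𝓝 x, ∃ z, z ∈ U ∧ z ∈ V ∧ f z < t := by
    intro t ht U hU
    have h1 : (⨅ z ∈ U ∩ V, f z) < t :=
      lt_of_le_of_lt (hB (U ∩ V) (Filter.inter_mem hU hV)) ht
    obtain ⟨z, hz⟩ := iInf_lt_iff.mp h1
    obtain ⟨hzUV, hz⟩ := iInf_lt_iff.mp hz
    exact ⟨z, hzUV.1, hzUV.2, hz⟩
  -- the index type
  let ι := {p : Set X × X // p.1 ∈ 𝓝 x ∧ p.2 ∈ p.1 ∧ p.2 ∈ V}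
  letI : Preorder ι :=
    { le := fun p q => p = q ∨ (q.1.1 ⊆ p.1.1 ∧ f q.1.2 < f p.1.2)
      le_refl := fun p => Or.inl rfl
      le_trans := by
        rintro p q r (rfl | ⟨h1, h2⟩) hqr
        · exact hqr
        · rcases hqr with rfl | ⟨h3, h4⟩
          · exact Or.inr ⟨h1, h2⟩
          · exact Or.inr ⟨h3.trans h1, h4.trans h2⟩ }
  haveI : Nonempty ι := ⟨⟨(V, x), hV, hx, hx⟩⟩
  haveI : IsDirected ι (· ≤ ·) := by
    constructor
    intro p q
    have hpm : m < f p.1.2 := hVlt _ p.2.2.2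
    have hqm : m < f q.1.2 := hVlt _ q.2.2.2
    have hmin : m < min (f p.1.2) (f q.1.2) := lt_min hpm hqm
    obtain ⟨z, hzU, hzV, hzlt⟩ :=
      key _ hmin (p.1.1 ∩ q.1.1) (Filter.inter_mem p.2.1 q.2.1)
    refine ⟨⟨(p.1.1 ∩ q.1.1, z), Filter.inter_mem p.2.1 q.2.1, hzU, hzV⟩, ?_, ?_⟩
    · exact Or.inr ⟨Set.inter_subset_left, lt_of_lt_of_le hzlt (min_le_left _ _)⟩
    · exact Or.inr ⟨Set.inter_subset_right, lt_of_lt_of_le hzlt (min_le_right _ _)⟩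
  let net : ι → X := fun p => p.1.2
  have htend : Tendsto net atTop (𝓝 x) := by
    rw [tendsto_def]
    intro W hW
    have hxW : x ∈ W := mem_of_mem_nhds hW
    refine Filter.mem_of_superset (Filter.mem_atTop
      (⟨(W ∩ V, x), Filter.inter_mem hW hV, ⟨hxW, hx⟩, hx⟩ : ι)) ?_
    rintro i (hi | hi)
    · simp only [Set.mem_preimage]
      rw [← hi]
      exact hxW
    · exact (hi.1 i.2.2.1).1
  have hdec : ∀ a b : ι, a < b → f (net b) < f (net a) := by
    intro a b hab
    rcases hab.1 with rfl | h'
    · exact absurd (le_refl a) hab.2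
    · exact h'.2
  have hfx : f x ≤ ⨅ i : ι, f (net i) := h ι net htend hdec
  have hinf : (⨅ i : ι, f (net i)) ≤ m := by
    by_contra hc
    push_neg at hc
    obtain ⟨z, hzV, hzV', hzlt⟩ := key _ hc V hV
    exact absurd (iInf_le (fun i : ι => f (net i)) ⟨(V, z), hV, hzV, hzV'⟩)
      (not_le.mpr hzlt)
  exact absurd (lt_of_le_of_lt (hfx.trans hinf) (hVlt x hx)) (lt_irrefl _)
end

section
/- If f : X → ℝ∪{±∞} is lower quasi-continuous at x (for all y with f(y) < f(x), f(y) ≤ liminf_{z→x} f(z)), then f is partially lower continuous at x: for each y with f(y) < f(x) such that (x,y) is not a jump point, there exists a neighborhood U of x with f(y) ≤ inf_U f. -/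
open Filter Topology Set

/-- Lower quasi-continuity at `x`. -/
def LQCAt {X : Type*} [TopologicalSpace X] (f : X → EReal) (x : X) : Prop :=
  ∀ y, f y < f x → f y ≤ limInfAt f x

/-- `(p, q)` is a jump of `f`. -/
def IsJump {X : Type*} (f : X → EReal) (p q : EReal) : Prop :=
  p < q ∧ p ∈ range f ∧ q ∈ range f ∧ ∀ z : X, ¬ (p < f z ∧ f z < q)

/-- `(x, y)` is a jump point of `f`. -/
def IsJumpPoint {X : Type*} (f : X → EReal) (x y : X) : Prop :=
  IsJump f (f x) (f y) ∨ IsJump f (f y) (f x)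

/-- Partial lower continuity at `x`. -/
def PLCAt {X : Type*} [TopologicalSpace X] (f : X → EReal) (x : X) : Prop :=
  ∀ y : X, f y < f x → ¬ IsJumpPoint f x y →
    ∃ U ∈ 𝓝 x, ∀ z ∈ U, f y ≤ f z

theorem lqc_implies_plc {X : Type*} [TopologicalSpace X]
    (f : X → EReal) (x : X) (h : LQCAt f x) : PLCAt f x := by
  intro y hy hnj
  have hex : ∃ z, f y < f z ∧ f z < f x := by
    by_contra hc
    push_neg at hc
    exact hnj (Or.inr ⟨hy, ⟨y, rfl⟩, ⟨x, rfl⟩,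
      fun z hz => (hc z hz.1).not_gt hz.2⟩)
  obtain ⟨z₀, hz₁, hz₂⟩ := hex
  have h3 : f y < limInfAt f x := lt_of_lt_of_le hz₁ (h z₀ hz₂)
  rw [limInfAt] at h3
  obtain ⟨U, hU⟩ := lt_iSup_iff.mp h3
  obtain ⟨hUx, hU2⟩ := lt_iSup_iff.mp hU
  exact ⟨U, hUx, fun z hz => hU2.le.trans (iInf₂_le z hz)⟩
end

section
/- If f : X → ℝ∪{±∞} is sequentially lower pseudo-continuous at x, then f is sequentially transfer lower continuous at x: either f(x) = inf_X f, or there exists y ∈ X such that for every sequence xₙ → x, f(y) < f(xₙ) for all sufficiently large n. -/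
open Filter Topology

/-- Sequential transfer lower continuity at `x`. -/
def STLCAt {X : Type*} [TopologicalSpace X] (f : X → EReal) (x : X) : Prop :=
  f x = (⨅ z : X, f z) ∨
    ∃ y : X, ∀ u : ℕ → X, Tendsto u atTop (𝓝 x) →
      ∀ᶠ n in atTop, f y < f (u n)

theorem slpc_implies_stlc {X : Type*} [TopologicalSpace X]
    (f : X → EReal) (x : X) (h : SLPCAt f x) : STLCAt f x := by
  by_cases hx : f x = (⨅ z : X, f z)
  · exact Or.inl hx
  · right
    have hlt : (⨅ z : X, f z) < f x :=
      lt_of_le_of_ne (iInf_le f x) (fun e => hx e.symm)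
    obtain ⟨y, hy⟩ := iInf_lt_iff.mp hlt
    exact ⟨y, fun u hu => eventually_lt_of_lt_liminf (h y hy u hu)⟩
end
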